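/- arXiv:2104.08159 — 3 statements merged into one kernel-verified Lean document; each statement's English description precedes it below -/
import Mathlib

section
/- Let $m, m' \in \mathbb{Z}$. Suppose that for all $k, l \in \mathbb{N}$ and all $(x,\xi) \in \mathbb{R}^n \times (\mathbb{R}^n \setminus \{0\})$ one has $a_k(x,-\xi) = (-1)^{m-k} a_k(x,\xi)$ and $b_l(x,-\xi) = (-1)^{m'-l} b_l(x,\xi)$ (the odd-class condition on the homogeneous symbol components). Then for every $j \in \mathbb{N}$ the composition components satisfy $c_j(x,-\xi) = (-1)^{m+m'-j} c_j(x,\xi)$ for all $x \in \mathbb{R}^n$ and $\xi \neq 0$; that is, the composition of two odd-class symbols is again odd class. -/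
/-!
Composition of odd-class symbols is odd class (local symbol computation).
-/

noncomputable section

attribute [local instance]
  Matrix.linftyOpNormedAddCommGroup Matrix.linftyOpNormedRing Matrix.linftyOpNormedSpace

/-- First-order partial derivative in the `i`-th coordinate direction. -/
noncomputable def pderivDir {n : ℕ} {M : Type*} [NormedAddCommGroup M] [NormedSpace ℝ M]
    (i : Fin n) (g : (Fin n → ℝ) → M) : (Fin n → ℝ) → M :=
  fun x => fderiv ℝ g x (Pi.single i 1)

/-- Iterated partial derivative `∂^μ` associated to a multi-index `μ : Fin n → ℕ`. -/
noncomputable def multiPDeriv {n : ℕ} {M : Type*} [NormedAddCommGroup M] [NormedSpace ℝ M]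
    (μ : Fin n → ℕ) (g : (Fin n → ℝ) → M) : (Fin n → ℝ) → M :=
  (List.finRange n).foldr (fun i h => (pderivDir i)^[μ i] h) g

/-- The `j`-th homogeneous component of the composition of two classical symbols with
homogeneous components `a k` and `b l`:
`c j (x, ξ) = ∑_{|μ|+k+l=j} (1/μ!) ∂_ξ^μ a_k (x,ξ) · D_x^μ b_l (x,ξ)`,
where `D_x^μ = (-i)^{|μ|} ∂_x^μ`. -/
noncomputable def compSymbol {n N : ℕ}
    (a b : ℕ → (Fin n → ℝ) → (Fin n → ℝ) → Matrix (Fin N) (Fin N) ℂ)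
    (j : ℕ) (x ξ : Fin n → ℝ) : Matrix (Fin N) (Fin N) ℂ :=
  ∑ μ ∈ Finset.Iic (fun _ : Fin n => j), ∑ k ∈ Finset.range (j + 1),
    ∑ l ∈ Finset.range (j + 1),
      if (∑ i, μ i) + k + l = j then
        (((∏ i, Nat.factorial (μ i) : ℕ) : ℂ))⁻¹ •
          (multiPDeriv μ (a k x) ξ *
            ((-Complex.I) ^ (∑ i, μ i) • multiPDeriv μ (fun x' => b l x' ξ) x))
      else 0

variable {n N : ℕ}

local notation "Mat" => Matrix (Fin N) (Fin N) ℂ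

/-! ### Single-step lemmas -/

lemma pderivDir_eqOn {s : Set (Fin n → ℝ)} (hs : IsOpen s) (i : Fin n)
    {g₁ g₂ : (Fin n → ℝ) → Mat} (h : Set.EqOn g₁ g₂ s) :
    Set.EqOn (pderivDir i g₁) (pderivDir i g₂) s := by
  intro y hy
  unfold pderivDir
  erw [Filter.EventuallyEq.fderiv_eq (h.eventuallyEq_of_mem (hs.mem_nhds hy))]
  rfl

lemma pderivDir_const_smul (c : ℂ) (hc : c ≠ 0) (i : Fin n)
    (g : (Fin n → ℝ) → Mat) :
    pderivDir i (fun y => c • g y) = fun y => c • pderivDir i g y := by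
  funext y
  unfold pderivDir
  by_cases h : DifferentiableAt ℝ g y
  · erw [fderiv_fun_const_smul h c]; rfl
  · have h2 : ¬ DifferentiableAt ℝ (fun y => c • g y) y := by
      intro h2
      have h3 := h2.fun_const_smul c⁻¹
      simp only [smul_smul, inv_mul_cancel₀ hc, one_smul] at h3
      exact h h3
    erw [fderiv_zero_of_not_differentiableAt h, fderiv_zero_of_not_differentiableAt h2]
    exact (smul_zero _).symm

lemma pderivDir_comp_neg (i : Fin n) (g : (Fin n → ℝ) → Mat) :
    pderivDir i (fun y => g (-y)) = fun y => (-1 : ℂ) • pderivDir i g (-y) := by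
  funext y
  unfold pderivDir
  by_cases h : DifferentiableAt ℝ g (-y)
  · have h2 : DifferentiableAt ℝ (fun y : Fin n → ℝ => -y) y := differentiable_id.neg y
    rw [show (fun y : Fin n → ℝ => g (-y)) = g ∘ (fun y => -y) from rfl, fderiv_comp y h h2]
    have h3 : fderiv ℝ (fun y : Fin n → ℝ => -y) y = -(ContinuousLinearMap.id ℝ _) := by
      rw [fderiv_fun_neg, fderiv_id']
    rw [h3]
    simp
  · have h2 : ¬ DifferentiableAt ℝ (fun y => g (-y)) y := by
      intro h2
      have h3 : DifferentiableAt ℝ (fun y : Fin n → ℝ => -y) (-y) := differentiable_id.neg (-y)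
      rw [show y = -(-y) from (neg_neg y).symm] at h2
      have h4 := h2.comp (-y) h3
      simp only [Function.comp_def, neg_neg] at h4
      exact h h4
    erw [fderiv_zero_of_not_differentiableAt h, fderiv_zero_of_not_differentiableAt h2]
    simp
    exact neg_zero.symm

/-! ### Iterate-level lemmas -/

lemma iter_pderivDir_eqOn {s : Set (Fin n → ℝ)} (hs : IsOpen s) (i : Fin n) (k : ℕ)
    {g₁ g₂ : (Fin n → ℝ) → Mat} (h : Set.EqOn g₁ g₂ s) :
    Set.EqOn ((pderivDir i)^[k] g₁) ((pderivDir i)^[k] g₂) s := by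
  induction k with
  | zero => simpa using h
  | succ k ih =>
    rw [Function.iterate_succ_apply', Function.iterate_succ_apply']
    exact pderivDir_eqOn hs i ih

lemma iter_pderivDir_const_smul (c : ℂ) (hc : c ≠ 0) (i : Fin n) (k : ℕ)
    (g : (Fin n → ℝ) → Mat) :
    (pderivDir i)^[k] (fun y => c • g y) = fun y => c • (pderivDir i)^[k] g y := by
  induction k with
  | zero => simp
  | succ k ih =>
    rw [Function.iterate_succ_apply', Function.iterate_succ_apply', ih,
      pderivDir_const_smul c hc]

lemma iter_pderivDir_comp_neg (i : Fin n) (k : ℕ) (g : (Fin n → ℝ) → Mat) :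
    (pderivDir i)^[k] (fun y => g (-y))
      = fun y => ((-1 : ℂ) ^ k) • (pderivDir i)^[k] g (-y) := by
  induction k with
  | zero => simp
  | succ k ih =>
    rw [Function.iterate_succ_apply', Function.iterate_succ_apply', ih,
      pderivDir_const_smul ((-1 : ℂ) ^ k) (by simp), pderivDir_comp_neg]
    funext y
    simp only [smul_smul]
    ring_nf

/-! ### Foldr (multiPDeriv) level lemmas -/

lemma foldr_eqOn {s : Set (Fin n → ℝ)} (hs : IsOpen s) (L : List (Fin n)) (μ : Fin n → ℕ)
    {g₁ g₂ : (Fin n → ℝ) → Mat} (h : Set.EqOn g₁ g₂ s) :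
    Set.EqOn (L.foldr (fun i h => (pderivDir i)^[μ i] h) g₁)
      (L.foldr (fun i h => (pderivDir i)^[μ i] h) g₂) s := by
  induction L with
  | nil => exact h
  | cons i L ih => exact iter_pderivDir_eqOn hs i (μ i) ih

lemma foldr_const_smul (c : ℂ) (hc : c ≠ 0) (L : List (Fin n)) (μ : Fin n → ℕ)
    (g : (Fin n → ℝ) → Mat) :
    L.foldr (fun i h => (pderivDir i)^[μ i] h) (fun y => c • g y)
      = fun y => c • L.foldr (fun i h => (pderivDir i)^[μ i] h) g y := by
  induction L with
  | nil => rfl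
  | cons i L ih =>
    simp only [List.foldr_cons, ih]
    exact iter_pderivDir_const_smul c hc i (μ i) _

lemma foldr_comp_neg (L : List (Fin n)) (μ : Fin n → ℕ) (g : (Fin n → ℝ) → Mat) :
    L.foldr (fun i h => (pderivDir i)^[μ i] h) (fun y => g (-y))
      = fun y => ((-1 : ℂ) ^ (L.map μ).sum) •
          L.foldr (fun i h => (pderivDir i)^[μ i] h) g (-y) := by
  induction L with
  | nil => simp
  | cons i L ih =>
    simp only [List.foldr_cons, ih]
    rw [iter_pderivDir_const_smul _ (by simp) i (μ i)]
    rw [show (fun y => L.foldr (fun i h => (pderivDir i)^[μ i] h) g (-y))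
      = (fun y => (L.foldr (fun i h => (pderivDir i)^[μ i] h) g) (-y)) from rfl,
      iter_pderivDir_comp_neg]
    funext y
    simp only [List.map_cons, List.sum_cons, smul_smul, pow_add]
    ring_nf

/-! ### multiPDeriv versions -/

lemma multiPDeriv_const_smul (c : ℂ) (hc : c ≠ 0) (μ : Fin n → ℕ)
    (g : (Fin n → ℝ) → Mat) :
    multiPDeriv μ (fun y => c • g y) = fun y => c • multiPDeriv μ g y :=
  foldr_const_smul c hc _ μ g

lemma multiPDeriv_neg_of_parity {f : (Fin n → ℝ) → Mat} {c : ℂ} (hc : c ≠ 0)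
    (hf : ∀ ξ : Fin n → ℝ, ξ ≠ 0 → f (-ξ) = c • f ξ) (μ : Fin n → ℕ)
    (ξ : Fin n → ℝ) (hξ : ξ ≠ 0) :
    multiPDeriv μ f (-ξ) = (((-1 : ℂ) ^ (∑ i, μ i)) * c) • multiPDeriv μ f ξ := by
  have hs : IsOpen {y : Fin n → ℝ | y ≠ 0} := isOpen_ne
  have h1 : Set.EqOn (fun y => f (-y)) (fun y => c • f y) {y : Fin n → ℝ | y ≠ 0} :=
    fun y hy => hf y hy
  have h2 := foldr_eqOn hs (List.finRange n) μ h1 (Set.mem_setOf.mpr hξ)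
  rw [foldr_comp_neg, foldr_const_smul c hc] at h2
  have hsum : ((List.finRange n).map μ).sum = ∑ i, μ i := (Fin.sum_univ_def μ).symm
  rw [hsum] at h2
  have h3 : multiPDeriv μ f (-ξ)
      = ((-1 : ℂ) ^ (∑ i, μ i)) • (((-1 : ℂ) ^ (∑ i, μ i)) • multiPDeriv μ f (-ξ)) := by
    rw [smul_smul, ← pow_add, ← two_mul, pow_mul]
    norm_num
  rw [h3, show ((-1 : ℂ) ^ (∑ i, μ i)) • multiPDeriv μ f (-ξ)
      = c • multiPDeriv μ f ξ from h2, smul_smul]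

/-- if all homogeneous components of the symbols `a` (of order `m`) and `b`
(of order `m'`) satisfy the odd-class parity condition, then so do all homogeneous
components of their composition. -/
theorem compSymbol_odd_class (n N : ℕ) (hn : 1 ≤ n) (hN : 1 ≤ N) (m m' : ℤ)
    (a b : ℕ → (Fin n → ℝ) → (Fin n → ℝ) → Matrix (Fin N) (Fin N) ℂ)
    (ha_smooth : ∀ k, ContDiffOn ℝ (⊤ : ℕ∞)
      (fun p : (Fin n → ℝ) × (Fin n → ℝ) => a k p.1 p.2) {p | p.2 ≠ 0})
    (hb_smooth : ∀ l, ContDiffOn ℝ (⊤ : ℕ∞)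
      (fun p : (Fin n → ℝ) × (Fin n → ℝ) => b l p.1 p.2) {p | p.2 ≠ 0})
    (ha : ∀ (k : ℕ) (x ξ : Fin n → ℝ), ξ ≠ 0 →
      a k x (-ξ) = ((-1 : ℂ) ^ (m - (k : ℤ))) • a k x ξ)
    (hb : ∀ (l : ℕ) (x ξ : Fin n → ℝ), ξ ≠ 0 →
      b l x (-ξ) = ((-1 : ℂ) ^ (m' - (l : ℤ))) • b l x ξ)
    (j : ℕ) (x ξ : Fin n → ℝ) (hξ : ξ ≠ 0) :
    compSymbol a b j x (-ξ) = ((-1 : ℂ) ^ (m + m' - (j : ℤ))) • compSymbol a b j x ξ := by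
  have hI : (-1 : ℂ) ≠ 0 := by norm_num
  unfold compSymbol
  rw [Finset.smul_sum]
  refine Finset.sum_congr rfl fun μ _ => ?_
  rw [Finset.smul_sum]
  refine Finset.sum_congr rfl fun k _ => ?_
  rw [Finset.smul_sum]
  refine Finset.sum_congr rfl fun l _ => ?_
  split_ifs with h
  · have hca : ((-1 : ℂ) ^ (m - (k : ℤ))) ≠ 0 := zpow_ne_zero _ hI
    have hcb : ((-1 : ℂ) ^ (m' - (l : ℤ))) ≠ 0 := zpow_ne_zero _ hI
    have hA := multiPDeriv_neg_of_parity hca (fun ξ' hξ' => ha k x ξ' hξ') μ ξ hξ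
    have hB : multiPDeriv μ (fun x' => b l x' (-ξ)) x
        = ((-1 : ℂ) ^ (m' - (l : ℤ))) • multiPDeriv μ (fun x' => b l x' ξ) x := by
      have he : (fun x' => b l x' (-ξ))
          = fun x' => ((-1 : ℂ) ^ (m' - (l : ℤ))) • b l x' ξ :=
        funext fun x' => hb l x' ξ hξ
      rw [he, multiPDeriv_const_smul _ hcb]
    rw [hA, hB]
    have hj : (j : ℤ) = (∑ i, μ i : ℕ) + k + l := by exact_mod_cast h.symm
    have key : ((-1 : ℂ) ^ (∑ i, μ i)) * (-1 : ℂ) ^ (m - (k : ℤ))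
        * (-1 : ℂ) ^ (m' - (l : ℤ)) = (-1 : ℂ) ^ (m + m' - (j : ℤ)) := by
      rw [← zpow_natCast (-1 : ℂ) (∑ i, μ i), ← zpow_add₀ hI, ← zpow_add₀ hI]
      have he : ((∑ i, μ i : ℕ) : ℤ) + (m - k) + (m' - l)
          = (m + m' - j) + 2 * (∑ i, μ i : ℕ) := by rw [hj]; ring
      rw [he, zpow_add₀ hI, zpow_mul]
      norm_num
    simp only [Matrix.smul_mul, Matrix.mul_smul, smul_smul]
    congr 1
    rw [← key]
    ring
  · simp
end
end

section
/- (Arnold's sectional-curvature identity.) For all $X, Y \in \mathfrak{g}$, $$-B(\mathrm{R}(X,Y)X, Y) = -\tfrac{3}{4} B([X,Y],[X,Y]) + \tfrac{1}{2} B([X,Y], \alpha\,X\,Y - \alpha\,Y\,X) + B(\mathfrak{N}(X,Y), \mathfrak{N}(X,Y)) - B(\mathfrak{N}(X,X), \mathfrak{N}(Y,Y)).$$ -/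
/-- Arnold's sectional-curvature identity, Theorem 18 of the paper:
with `ad_X Y = [Y,X]`, `α = ad_𝔸` the metric adjoint of the adjoint representation
(`B([X,Y], Z) = -B(Y, α X Z)`), the connection one-form
`θ_X Y = ½ (ad_X Y - α X Y - α Y X)`, the bilinear map `𝔑(X,Y) = ½ (α X Y + α Y X)`,
and the curvature operator `R(X,Y)Z = θ_X (θ_Y Z) - θ_Y (θ_X Z) - θ_{ad_X Y} Z`, one has
`-B(R(X,Y)X, Y) = -(3/4) B([X,Y],[X,Y]) + (1/2) B([X,Y], α X Y - α Y X)
                 + B(𝔑(X,Y), 𝔑(X,Y)) - B(𝔑(X,X), 𝔑(Y,Y))`. -/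
theorem arnold_curvature_identity
    {𝔤 : Type*} [LieRing 𝔤] [LieAlgebra ℝ 𝔤]
    (B : 𝔤 →ₗ[ℝ] 𝔤 →ₗ[ℝ] ℝ) (hBsymm : ∀ X Y : 𝔤, B X Y = B Y X)
    (α : 𝔤 →ₗ[ℝ] 𝔤 →ₗ[ℝ] 𝔤)
    (hα : ∀ X Y Z : 𝔤, B ⁅X, Y⁆ Z = - B Y (α X Z))
    (θ : 𝔤 → 𝔤 → 𝔤)
    (hθ : ∀ X Y : 𝔤, θ X Y = (2 : ℝ)⁻¹ • (⁅Y, X⁆ - α X Y - α Y X))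
    (𝔑 : 𝔤 → 𝔤 → 𝔤)
    (h𝔑 : ∀ X Y : 𝔤, 𝔑 X Y = (2 : ℝ)⁻¹ • (α X Y + α Y X))
    (R : 𝔤 → 𝔤 → 𝔤 → 𝔤)
    (hR : ∀ X Y Z : 𝔤, R X Y Z = θ X (θ Y Z) - θ Y (θ X Z) - θ ⁅Y, X⁆ Z) :
    ∀ X Y : 𝔤,
      - B (R X Y X) Y =
        - (3 / 4 : ℝ) * B ⁅X, Y⁆ ⁅X, Y⁆
        + (1 / 2 : ℝ) * B ⁅X, Y⁆ (α X Y - α Y X)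
        + B (𝔑 X Y) (𝔑 X Y) - B (𝔑 X X) (𝔑 Y Y) := by
  intro X Y
  have hB2 : ∀ u v w : 𝔤, B (α u v) w = - B ⁅u, w⁆ v := fun u v w => by
    rw [hBsymm]; linarith [hα u w v]
  have hlie : ∀ u v w : 𝔤, B ⁅u, v⁆ w = - B ⁅v, u⁆ w := fun u v w => by
    have h : (⁅u, v⁆ : 𝔤) = -⁅v, u⁆ := (lie_skew u v).symm
    rw [h, map_neg, LinearMap.neg_apply]
  have t1 : B (θ X (θ Y X)) Y = (4:ℝ)⁻¹ * (B ⁅X,Y⁆ ⁅X,Y⁆ - B (α X Y) (α X Y)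
      - B (α Y X) (α Y X) - 2 * B (α X Y) (α Y X)) := by
    rw [hθ, hθ]
    simp only [smul_sub, smul_add, lie_smul, smul_lie, lie_sub, sub_lie, lie_add, add_lie,
      map_smul, map_sub, map_add, LinearMap.smul_apply, LinearMap.sub_apply,
      LinearMap.add_apply, smul_eq_mul, lie_self, zero_lie, lie_zero, map_zero,
      LinearMap.zero_apply, zero_sub, map_neg, LinearMap.neg_apply, neg_lie, lie_neg]
    linear_combination (1/4 : ℝ) * hlie ⁅X,Y⁆ X Y - (1/4 : ℝ) * hα X ⁅X,Y⁆ Y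
      - (1/4 : ℝ) * hlie (α Y X) X Y + (1/4 : ℝ) * hα X (α Y X) Y
      - (1/4 : ℝ) * hlie (α X Y) X Y + (1/4 : ℝ) * hα X (α X Y) Y
      - (1/4 : ℝ) * hB2 X ⁅X,Y⁆ Y + (1/4 : ℝ) * hB2 X (α Y X) Y + (1/4 : ℝ) * hB2 X (α X Y) Y
      - (1/4 : ℝ) * hB2 ⁅X,Y⁆ X Y + (1/4 : ℝ) * hlie ⁅X,Y⁆ Y X - (1/4 : ℝ) * hα Y ⁅X,Y⁆ X
      + (1/4 : ℝ) * hB2 (α Y X) X Y - (1/4 : ℝ) * hlie (α Y X) Y X + (1/4 : ℝ) * hα Y (α Y X) X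
      + (1/4 : ℝ) * hB2 (α X Y) X Y - (1/4 : ℝ) * hlie (α X Y) Y X + (1/4 : ℝ) * hα Y (α X Y) X
      - (1/4 : ℝ) * hBsymm (α Y X) (α X Y)
  have t2 : B (θ Y (θ X X)) Y = - B (α X X) (α Y Y) := by
    rw [hθ, hθ]
    simp only [smul_sub, smul_add, lie_smul, smul_lie, lie_sub, sub_lie, lie_add, add_lie,
      map_smul, map_sub, map_add, LinearMap.smul_apply, LinearMap.sub_apply,
      LinearMap.add_apply, smul_eq_mul, lie_self, zero_lie, lie_zero, map_zero,
      LinearMap.zero_apply, zero_sub, map_neg, LinearMap.neg_apply, neg_lie, lie_neg]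
    linear_combination -hlie (α X X) Y Y + hα Y (α X X) Y + (1/2:ℝ) * hB2 Y (α X X) Y
      - (1/4:ℝ) * hlie Y Y (α X X) + (1/2:ℝ) * hB2 (α X X) Y Y
  have t3 : B (θ ⁅Y,X⁆ X) Y = (2:ℝ)⁻¹ * (B ⁅X,Y⁆ (α X Y) - B ⁅X,Y⁆ (α Y X)
      - B ⁅X,Y⁆ ⁅X,Y⁆) := by
    rw [hθ]
    simp only [smul_sub, smul_add, lie_smul, smul_lie, lie_sub, sub_lie, lie_add, add_lie,
      map_smul, map_sub, map_add, LinearMap.smul_apply, LinearMap.sub_apply,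
      LinearMap.add_apply, smul_eq_mul, lie_self, zero_lie, lie_zero, map_zero,
      LinearMap.zero_apply, zero_sub, map_neg, LinearMap.neg_apply, neg_lie, lie_neg]
    linear_combination (1/2:ℝ) * hα X ⁅Y,X⁆ Y - (1/2:ℝ) * hlie Y X (α X Y)
      - (1/2:ℝ) * hB2 ⁅Y,X⁆ X Y + (1/2:ℝ) * hlie ⁅Y,X⁆ Y X - (1/2:ℝ) * hα Y ⁅Y,X⁆ X
      + (1/2:ℝ) * hlie Y X (α Y X) - (1/2:ℝ) * hB2 X ⁅Y,X⁆ Y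
      + (1/2:ℝ) * hBsymm ⁅X,Y⁆ ⁅Y,X⁆ + (1/2:ℝ) * hlie Y X ⁅X,Y⁆
  rw [hR]
  simp only [h𝔑, map_sub, map_add, map_smul, LinearMap.sub_apply, LinearMap.add_apply,
    LinearMap.smul_apply, smul_eq_mul, smul_add]
  rw [t1, t2, t3]
  linear_combination (1/4:ℝ) * hBsymm (α X Y) (α Y X)
end

section
/- (Formula for the metric adjoint of the adjoint representation, Equation (16).) Define $\mathrm{ad}_{\mathbb{A}}(X)Z := \mathbb{A}^{-1}\bigl(\,[\mathbb{A}(Z)\,Q_0,\; X^*]\; Q_0^{-1}\,\bigr)$. Then for all $X, Y, Z \in A$, $$\langle [X,Y],\, Z \rangle_{\mathbb{A}} = -\,\langle Y,\, \mathrm{ad}_{\mathbb{A}}(X)\,Z \rangle_{\mathbb{A}}.$$ -/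
/-! Moving `Q₀⁻¹` through the star cancels it against the `Q₀` of the pairing (a right inverse
of a self-adjoint element is self-adjoint), so `⟨Y, ad_𝔸(X) Z⟩_𝔸 = Re τ (Y [X, M])` with
`M = (𝔸(Z) Q₀)^*`, while `⟨[X, Y], Z⟩_𝔸 = Re τ ([X, Y] M)`. The two agree up to sign already
before taking real parts, by cyclicity of the trace. -/

theorem star_eq_of_mul_eq_one_of_star_eq {M : Type*} [Monoid M] [StarMul M] {q r : M}
    (hq : star q = q) (h : q * r = 1) : star r = r :=
  left_inv_eq_right_inv (by rw [← hq, ← star_mul, h, star_one]) h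

theorem map_commutator_mul_eq_neg {A M F : Type*} [Ring A] [AddCommGroup M] [FunLike F A M]
    [AddMonoidHomClass F A M] (τ : F) (hτ : ∀ u v : A, τ (u * v) = τ (v * u)) (X Y W : A) :
    τ ((X * Y - Y * X) * W) = -τ (Y * (X * W - W * X)) := by
  have hcycle : τ (Y * (W * X)) = τ (X * Y * W) := by
    rw [← mul_assoc, hτ, ← mul_assoc]
  rw [sub_mul, mul_sub, map_sub, map_sub, hcycle, mul_assoc Y X W]
  abel

theorem ad_inertia_adjoint_formula_general
    {A : Type*} [Ring A] [Algebra ℂ A] [StarRing A]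
    (τ : A →ₗ[ℂ] ℂ) (hτ : ∀ u v : A, τ (u * v) = τ (v * u))
    (Q₀ Q₀inv : A) (hQ₀1 : Q₀ * Q₀inv = 1)
    (hQ₀sa : star Q₀ = Q₀)
    (𝔸 : A ≃ₗ[ℂ] A)
    (pair : A → A → ℝ) (hpair : ∀ X Y : A, pair X Y = (τ (X * Q₀ * star (𝔸 Y))).re)
    (adA : A → A → A)
    (hadA : ∀ X Z : A,
      adA X Z = 𝔸.symm ((𝔸 Z * Q₀ * star X - star X * (𝔸 Z * Q₀)) * Q₀inv)) :
    ∀ X Y Z : A, pair (X * Y - Y * X) Z = - pair Y (adA X Z) := by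
  intro X Y Z
  have hQ₀inv : star Q₀inv = Q₀inv := star_eq_of_mul_eq_one_of_star_eq hQ₀sa hQ₀1
  set P := 𝔸 Z * Q₀
  have hP : star P = Q₀ * star (𝔸 Z) := by rw [star_mul, hQ₀sa]
  have hcancel : Y * Q₀ * star ((P * star X - star X * P) * Q₀inv)
      = Y * (X * star P - star P * X) := by
    rw [star_mul, hQ₀inv, mul_assoc, ← mul_assoc Q₀, hQ₀1, one_mul, star_sub, star_mul P,
      star_mul (star X), star_star]
  rw [hpair, hpair, hadA, LinearEquiv.apply_symm_apply, hcancel, mul_assoc _ Q₀, ← hP,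
    map_commutator_mul_eq_neg τ hτ, Complex.neg_re]

/-- Equation (16) of the paper: in a unital complex star algebra with a
tracial linear functional `τ`, a self-adjoint invertible element `Q₀`, and a linear
bijection (inertia operator) `𝔸`, the operator
`ad_𝔸(X) Z := 𝔸⁻¹ ([𝔸(Z) Q₀, X*] Q₀⁻¹)` is an adjoint of the adjoint representation with
respect to the pairing `⟨X, Y⟩_𝔸 := Re τ (X Q₀ (𝔸 Y)*)`, i.e.
`⟨[X,Y], Z⟩_𝔸 = - ⟨Y, ad_𝔸(X) Z⟩_𝔸`. -/
theorem ad_inertia_adjoint_formula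
    {A : Type*} [Ring A] [Algebra ℂ A] [StarRing A] [StarModule ℂ A]
    (τ : A →ₗ[ℂ] ℂ) (hτ : ∀ u v : A, τ (u * v) = τ (v * u))
    (Q₀ Q₀inv : A) (hQ₀1 : Q₀ * Q₀inv = 1) (hQ₀2 : Q₀inv * Q₀ = 1)
    (hQ₀sa : star Q₀ = Q₀)
    (𝔸 : A ≃ₗ[ℂ] A)
    (pair : A → A → ℝ) (hpair : ∀ X Y : A, pair X Y = (τ (X * Q₀ * star (𝔸 Y))).re)
    (adA : A → A → A)
    (hadA : ∀ X Z : A,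
      adA X Z = 𝔸.symm ((𝔸 Z * Q₀ * star X - star X * (𝔸 Z * Q₀)) * Q₀inv)) :
    ∀ X Y Z : A, pair (X * Y - Y * X) Z = - pair Y (adA X Z) :=
  ad_inertia_adjoint_formula_general τ hτ Q₀ Q₀inv hQ₀1 hQ₀sa 𝔸 pair hpair adA hadA
end
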